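/- Let D be a category with an initial object 0 and colimits of ω-chains, and let E : D → D be a functor preserving colimits of ω-chains. Then the colimit μE of the ω-chain 0 → E(0) → E²(0) → ⋯ (starting from the unique map 0 → E(0)) carries an E-algebra structure E(μE) → μE that is an initial object in the category of E-algebras. (Adámek's theorem.) -/

import Mathlib

/-!
An algebra `ξ : E A ⟶ A` induces a cocone `Eⁿ(0) ⟶ A` on Adámek's chain by iterating
`f ↦ E f ≫ ξ` on `0 ⟶ A`. Since `E` preserves the colimit `μE` of the chain, `E(μE)` is the
colimit of the shifted chain `E(0) → E²(0) → ⋯`, which gives the structure map `E(μE) ⟶ μE`.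
The map `μE ⟶ A` induced by the cocone is an algebra morphism, and any algebra morphism
`μE ⟶ A` agrees with it on every `Eⁿ(0)` by induction on `n`.
-/

open CategoryTheory Limits

universe v u

variable {D : Type u} [Category.{v} D] [HasInitial D] [HasColimitsOfShape ℕ D]

/-- The objects `Eⁿ(0)` of Adámek's chain. -/
noncomputable def adamekObj (E : D ⥤ D) : ℕ → D :=
  fun n => Nat.rec (⊥_ D) (fun _ X => E.obj X) n

/-- The connecting maps `Eⁿ(0) ⟶ Eⁿ⁺¹(0)` of Adámek's chain, obtained by iterating
`E` on the unique map `0 ⟶ E 0`. -/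
noncomputable def adamekMap (E : D ⥤ D) : ∀ n : ℕ, adamekObj E n ⟶ adamekObj E (n + 1)
  | 0 => initial.to _
  | n + 1 => E.map (adamekMap E n)

/-- Adámek's ω-chain `0 → E 0 → E² 0 → ⋯` as a functor `ℕ ⥤ D`. -/
noncomputable def adamekChain (E : D ⥤ D) : ℕ ⥤ D := Functor.ofSequence (adamekMap E)

namespace CategoryTheory.Limits.Cocone

variable {C : Type*} [Category C]

def ofSequence {F : ℕ ⥤ C} {P : C} (ι : ∀ n, F.obj n ⟶ P)
    (w : ∀ n, F.map (homOfLE (n.le_add_right 1)) ≫ ι (n + 1) = ι n) : Cocone F where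
  pt := P
  ι := NatTrans.ofSequence ι fun n => by simpa using w n

end CategoryTheory.Limits.Cocone

section Adamek

variable (E : D ⥤ D)

omit [HasColimitsOfShape ℕ D] in
lemma adamekChain_map_succ (n : ℕ) :
    (adamekChain E).map (homOfLE (n.le_add_right 1)) = adamekMap E n :=
  Functor.ofSequence_map_homOfLE_succ _ n

omit [HasColimitsOfShape ℕ D] in
lemma adamekChain_map_succ_succ (n : ℕ) :
    (adamekChain E).map (homOfLE ((n + 1).le_add_right 1)) =
      E.map ((adamekChain E).map (homOfLE (n.le_add_right 1))) := by
  rw [adamekChain_map_succ, adamekChain_map_succ]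
  rfl

noncomputable def adamekShiftCocone : Cocone (adamekChain E ⋙ E) :=
  Cocone.ofSequence (fun n => colimit.ι (adamekChain E) (n + 1)) fun n => by
    rw [Functor.comp_map, ← adamekChain_map_succ_succ]
    exact colimit.w (adamekChain E) (homOfLE ((n + 1).le_add_right 1))

noncomputable def adamekStr [PreservesColimit (adamekChain E) E] :
    E.obj (colimit (adamekChain E)) ⟶ colimit (adamekChain E) :=
  (isColimitOfPreserves E (colimit.isColimit _)).desc (adamekShiftCocone E)

lemma map_ι_comp_adamekStr [PreservesColimit (adamekChain E) E] (n : ℕ) :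
    E.map (colimit.ι (adamekChain E) n) ≫ adamekStr E = colimit.ι (adamekChain E) (n + 1) :=
  (isColimitOfPreserves E (colimit.isColimit _)).fac (adamekShiftCocone E) n

variable {E}

noncomputable def adamekLeg (A : Endofunctor.Algebra E) : ∀ n : ℕ, adamekObj E n ⟶ A.a
  | 0 => initial.to A.a
  | n + 1 => E.map (adamekLeg A n) ≫ A.str

omit [HasColimitsOfShape ℕ D] in
lemma adamekMap_comp_adamekLeg (A : Endofunctor.Algebra E) (n : ℕ) :
    adamekMap E n ≫ adamekLeg A (n + 1) = adamekLeg A n := by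
  induction n with
  | zero => exact initial.hom_ext _ _
  | succ n ih =>
    change E.map (adamekMap E n) ≫ E.map (adamekLeg A (n + 1)) ≫ A.str = _
    rw [← E.map_comp_assoc, ih]
    rfl

noncomputable def adamekCocone (A : Endofunctor.Algebra E) : Cocone (adamekChain E) :=
  Cocone.ofSequence (adamekLeg A) fun n =>
    (congrArg (· ≫ adamekLeg A (n + 1)) (adamekChain_map_succ E n)).trans
      (adamekMap_comp_adamekLeg A n)

noncomputable def adamekDesc (A : Endofunctor.Algebra E) : colimit (adamekChain E) ⟶ A.a :=
  colimit.desc _ (adamekCocone A)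

lemma ι_adamekDesc (A : Endofunctor.Algebra E) (n : ℕ) :
    colimit.ι (adamekChain E) n ≫ adamekDesc A = adamekLeg A n :=
  colimit.ι_desc _ n

lemma adamekStr_comp_adamekDesc [PreservesColimit (adamekChain E) E]
    (A : Endofunctor.Algebra E) :
    adamekStr E ≫ adamekDesc A = E.map (adamekDesc A) ≫ A.str := by
  refine (isColimitOfPreserves E (colimit.isColimit _)).hom_ext fun n => ?_
  -- `(adamekChain E).obj (n + 1)` is `E.obj ((adamekChain E).obj n)` only up to unfolding, which
  -- `rw` does not see; so both sides are compared with `adamekLeg A (n + 1)` separately.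
  have h₁ : E.map (colimit.ι (adamekChain E) n) ≫ adamekStr E ≫ adamekDesc A =
      adamekLeg A (n + 1) := by
    rw [← Category.assoc, map_ι_comp_adamekStr]
    exact ι_adamekDesc A (n + 1)
  have h₂ : E.map (colimit.ι (adamekChain E) n) ≫ E.map (adamekDesc A) ≫ A.str =
      adamekLeg A (n + 1) := by
    rw [← E.map_comp_assoc, ι_adamekDesc]
    rfl
  exact h₁.trans h₂.symm

lemma eq_adamekDesc [PreservesColimit (adamekChain E) E] (A : Endofunctor.Algebra E)
    (g : colimit (adamekChain E) ⟶ A.a) (hg : E.map g ≫ A.str = adamekStr E ≫ g) :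
    g = adamekDesc A := by
  refine colimit.hom_ext fun n => ?_
  rw [ι_adamekDesc]
  induction n with
  | zero => exact initial.hom_ext _ _
  | succ n ih =>
    have h : E.map (colimit.ι (adamekChain E) n) ≫ adamekStr E ≫ g = adamekLeg A (n + 1) := by
      rw [← hg, ← E.map_comp_assoc, ih]
      rfl
    rw [← Category.assoc, map_ι_comp_adamekStr] at h
    exact h

end Adamek

/-- **Adámek's theorem.** The colimit `μE` of the ω-chain `0 → E(0) → E²(0) → ⋯`
carries an `E`-algebra structure `E(μE) ⟶ μE` which is an initial object in the
category of `E`-algebras. -/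
theorem adamek_initial_algebra (E : D ⥤ D) [PreservesColimitsOfShape ℕ E] :
    ∃ str : E.obj (colimit (adamekChain E)) ⟶ colimit (adamekChain E),
      Nonempty (IsInitial (Endofunctor.Algebra.mk (colimit (adamekChain E)) str)) :=
  ⟨adamekStr E, ⟨IsInitial.ofUniqueHom
    (fun A => ⟨adamekDesc A, (adamekStr_comp_adamekDesc A).symm⟩)
    (fun A g => Endofunctor.Algebra.Hom.ext (eq_adamekDesc A g.f g.h))⟩⟩
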